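/- Let N ≥ 2 and let positive step sizes τ_1,…,τ_N be given with step ratios r_k := τ_k/τ_{k-1} satisfying 0 < r_k ≤ r_user for 2 ≤ k ≤ N, where 0 < r_user < r_* (r_* ≈ 4.864 the positive root of 1+2r−r^{3/2}=0). Then the step-scaled DOC kernels θ̃_{k-j}^{(k)} := θ_{k-j}^{(k)}/√(τ_k τ_j) satisfy the explicit formula θ̃_{k-j}^{(k)} = ((1+r_j)/(1+2r_j)) Π_{i=j+1}^{k} (r_i^{3/2}/(1+2r_i)) for 2 ≤ j ≤ k ≤ N (with the empty product equal to 1), and consequently 0 < θ̃_{k-j}^{(k)} ≤ m_*^{k-j} where m_* := r_user^{3/2}/(1+2r_user) < 1. -/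

import Mathlib

/-- The adjacent time-step ratio `r_k := τ_k / τ_{k-1}`. -/
noncomputable def ratio (τ : ℕ → ℝ) (k : ℕ) : ℝ := τ k / τ (k - 1)

/-- The BDF2 kernel `b_0^{(n)} := (1+2r_n)/(τ_n(1+r_n))`. -/
noncomputable def b0 (τ : ℕ → ℝ) (n : ℕ) : ℝ :=
  (1 + 2 * ratio τ n) / (τ n * (1 + ratio τ n))

/-- The BDF2 kernel `b_1^{(n)} := -r_n²/(τ_n(1+r_n))`. -/
noncomputable def b1 (τ : ℕ → ℝ) (n : ℕ) : ℝ :=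
  -(ratio τ n ^ 2) / (τ n * (1 + ratio τ n))

/-- The BDF2 kernels `b_j^{(n)}`: `b_0^{(n)}`, `b_1^{(n)}` and zero for `j ≥ 2`. -/
noncomputable def bker (τ : ℕ → ℝ) (j n : ℕ) : ℝ :=
  if j = 0 then b0 τ n else if j = 1 then b1 τ n else 0

lemma rpow_three_half {r : ℝ} (hr : 0 < r) : r ^ ((3:ℝ)/2) = r * Real.sqrt r := by
  rw [show (3:ℝ)/2 = 1 + 1/2 by norm_num, Real.rpow_add hr, Real.rpow_one,
    Real.sqrt_eq_rpow]

lemma f_mono {r s : ℝ} (hr : 0 < r) (hrs : r ≤ s) :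
    r ^ ((3:ℝ)/2) / (1 + 2*r) ≤ s ^ ((3:ℝ)/2) / (1 + 2*s) := by
  have hs : 0 < s := lt_of_lt_of_le hr hrs
  rw [div_le_div_iff₀ (by linarith) (by linarith), rpow_three_half hr, rpow_three_half hs]
  set u := Real.sqrt r with hu_def
  set v := Real.sqrt s with hv_def
  have hu : u ≤ v := Real.sqrt_le_sqrt hrs
  have hu0 : 0 < u := Real.sqrt_pos.2 hr
  have hv0 : 0 < v := Real.sqrt_pos.2 hs
  have hur : u * u = r := Real.mul_self_sqrt hr.le
  have hus : v * v = s := Real.mul_self_sqrt hs.le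
  rw [← hur, ← hus]
  have h1 : u ^ 3 ≤ v ^ 3 := pow_le_pow_left₀ hu0.le hu 3
  have h2 : u ^ 2 * v ^ 2 * u ≤ u ^ 2 * v ^ 2 * v :=
    mul_le_mul_of_nonneg_left hu (by positivity)
  nlinarith [h1, h2]

theorem scaled_doc_kernels_formula_and_bound
    (N : ℕ) (hN : 2 ≤ N) (τ : ℕ → ℝ)
    (hτ : ∀ k, 1 ≤ k → k ≤ N → 0 < τ k)
    (ruser rstar : ℝ) (hruser_pos : 0 < ruser)
    (hrstar_pos : 0 < rstar)
    (hrstar_root : 1 + 2 * rstar - rstar ^ ((3 : ℝ) / 2) = 0)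
    (hru : ruser < rstar)
    (hr : ∀ k, 2 ≤ k → k ≤ N → 0 < ratio τ k ∧ ratio τ k ≤ ruser)
    (θ : ℕ → ℕ → ℝ)
    (hθdiag : ∀ n, 2 ≤ n → θ n n = 1 / b0 τ n)
    (hθrec : ∀ n k, 2 ≤ k → k < n →
      θ n k = -(1 / b0 τ k) * ∑ j ∈ Finset.Icc (k + 1) n, θ n j * bker τ (j - k) j) :
    ∀ j k, 2 ≤ j → j ≤ k → k ≤ N →
      θ k j / Real.sqrt (τ k * τ j)
          = (1 + ratio τ j) / (1 + 2 * ratio τ j)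
            * ∏ i ∈ Finset.Icc (j + 1) k, ratio τ i ^ ((3 : ℝ) / 2) / (1 + 2 * ratio τ i)
        ∧ 0 < θ k j / Real.sqrt (τ k * τ j)
        ∧ θ k j / Real.sqrt (τ k * τ j) ≤ (ruser ^ ((3 : ℝ) / 2) / (1 + 2 * ruser)) ^ (k - j) := by
  have hrpos : ∀ i, 2 ≤ i → i ≤ N → 0 < ratio τ i := fun i h1 h2 => (hr i h1 h2).1
  have key : ∀ d j, 2 ≤ j → j + d ≤ N →
      θ (j + d) j / Real.sqrt (τ (j + d) * τ j)
        = (1 + ratio τ j) / (1 + 2 * ratio τ j)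
          * ∏ i ∈ Finset.Icc (j + 1) (j + d),
              ratio τ i ^ ((3:ℝ)/2) / (1 + 2 * ratio τ i) := by
    intro d
    induction d with
    | zero =>
      intro j hj hjN
      simp only [Nat.add_zero] at *
      rw [Finset.Icc_eq_empty (by omega), Finset.prod_empty, mul_one]
      have hτj : 0 < τ j := hτ j (by omega) hjN
      have hrj := hrpos j hj hjN
      rw [hθdiag j hj, Real.sqrt_mul_self hτj.le]
      simp only [b0]
      rw [one_div_div]
      field_simp
    | succ d ih =>
      intro j hj hjN
      have hih := ih (j+1) (by omega) (by omega)
      rw [show j+1+1 = j+2 from by omega, show j+1+d = j+(d+1) from by omega] at hih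
      have hτj : 0 < τ j := hτ j (by omega) (by omega)
      have hτj1 : 0 < τ (j+1) := hτ (j+1) (by omega) (by omega)
      have hτk : 0 < τ (j+(d+1)) := hτ _ (by omega) hjN
      have hp : 0 < ratio τ j := hrpos j hj (by omega)
      have hs : 0 < ratio τ (j+1) := hrpos (j+1) (by omega) (by omega)
      have hratio : ratio τ (j+1) = τ (j+1) / τ j := by simp [ratio]
      have hτ1eq : τ (j+1) = ratio τ (j+1) * τ j := by
        rw [hratio]; field_simp
      -- reduce the sum to a single term
      have hsum : ∑ m ∈ Finset.Icc (j+1) (j+(d+1)), θ (j+(d+1)) m * bker τ (m - j) m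
          = θ (j+(d+1)) (j+1) * b1 τ (j+1) := by
        rw [Finset.sum_eq_single_of_mem (j+1)
          (Finset.mem_Icc.2 ⟨le_refl _, by omega⟩)]
        · rw [show j+1-j = 1 from by omega]
          simp [bker]
        · intro m hm hne
          rw [Finset.mem_Icc] at hm
          have h0 : m - j ≠ 0 := by omega
          have h1 : m - j ≠ 1 := by omega
          simp [bker, h0, h1]
      have hrec := hθrec (j+(d+1)) j hj (by omega)
      rw [hsum] at hrec
      -- express θ (j+(d+1)) (j+1) via the inductive hypothesis
      have hsq1 : 0 < Real.sqrt (τ (j+(d+1)) * τ (j+1)) :=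
        Real.sqrt_pos.2 (by positivity)
      rw [div_eq_iff (ne_of_gt hsq1)] at hih
      rw [hrec, hih]
      -- split the product
      have hsplit : Finset.Icc (j+1) (j+(d+1))
          = insert (j+1) (Finset.Icc (j+2) (j+(d+1))) := by
        ext m; simp only [Finset.mem_Icc, Finset.mem_insert]; omega
      rw [hsplit, Finset.prod_insert (by simp)]
      -- sqrt manipulation
      have hsq2 : Real.sqrt (τ (j+(d+1)) * τ (j+1))
          = Real.sqrt (τ (j+(d+1)) * τ j) * Real.sqrt (ratio τ (j+1)) := by
        rw [hτ1eq, show τ (j+(d+1)) * (ratio τ (j+1) * τ j)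
            = (τ (j+(d+1)) * τ j) * ratio τ (j+1) by ring,
          Real.sqrt_mul (by positivity)]
      rw [hsq2, rpow_three_half hs]
      have hA : 0 < Real.sqrt (τ (j+(d+1)) * τ j) := Real.sqrt_pos.2 (by positivity)
      simp only [b0, b1]
      rw [hτ1eq]
      generalize hPdef : (∏ i ∈ Finset.Icc (j+2) (j+(d+1)),
        ratio τ i ^ ((3:ℝ)/2) / (1 + 2 * ratio τ i)) = P
      generalize hAdef : Real.sqrt (τ (j+(d+1)) * τ j) = A at hA
      generalize hBdef : Real.sqrt (ratio τ (j+1)) = B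
      generalize hadef : τ j = a at hτj hτ1eq ⊢
      generalize hpdef : ratio τ j = p at hp
      generalize hsdef : ratio τ (j+1) = s at hs hτ1eq ⊢
      have h1p : (0:ℝ) < 1 + p := by linarith
      have h2p : (0:ℝ) < 1 + 2 * p := by linarith
      have h1s : (0:ℝ) < 1 + s := by linarith
      have h2s : (0:ℝ) < 1 + 2 * s := by linarith
      field_simp
  intro j k hj hjk hkN
  obtain ⟨d, rfl⟩ : ∃ d, k = j + d := ⟨k - j, by omega⟩
  have hform := key d j hj hkN
  refine ⟨hform, ?_, ?_⟩
  · rw [hform]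
    have h1 : 0 < (1 + ratio τ j) / (1 + 2 * ratio τ j) := by
      have := hrpos j hj (by omega)
      apply div_pos <;> linarith
    refine mul_pos h1 (Finset.prod_pos ?_)
    intro i hi
    rw [Finset.mem_Icc] at hi
    have hri := hrpos i (by omega) (by omega)
    exact div_pos (Real.rpow_pos_of_pos hri _) (by linarith)
  · rw [hform, show j + d - j = d from by omega]
    have hp := hrpos j hj (by omega)
    have hc : (1 + ratio τ j) / (1 + 2 * ratio τ j) ≤ 1 := by
      rw [div_le_one (by linarith)]; linarith
    have hP0 : 0 ≤ ∏ i ∈ Finset.Icc (j + 1) (j + d),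
        ratio τ i ^ ((3:ℝ)/2) / (1 + 2 * ratio τ i) := by
      apply Finset.prod_nonneg
      intro i hi
      rw [Finset.mem_Icc] at hi
      have hri := hrpos i (by omega) (by omega)
      exact le_of_lt (div_pos (Real.rpow_pos_of_pos hri _) (by linarith))
    have hPle : ∏ i ∈ Finset.Icc (j + 1) (j + d),
        ratio τ i ^ ((3:ℝ)/2) / (1 + 2 * ratio τ i)
        ≤ (ruser ^ ((3:ℝ)/2) / (1 + 2 * ruser)) ^ d := by
      have := Finset.prod_le_prod (s := Finset.Icc (j+1) (j+d))
        (f := fun i => ratio τ i ^ ((3:ℝ)/2) / (1 + 2 * ratio τ i))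
        (g := fun _ => ruser ^ ((3:ℝ)/2) / (1 + 2 * ruser))
        (fun i hi => by
          rw [Finset.mem_Icc] at hi
          have hri := hrpos i (by omega) (by omega)
          exact le_of_lt (div_pos (Real.rpow_pos_of_pos hri _) (by linarith)))
        (fun i hi => by
          rw [Finset.mem_Icc] at hi
          exact f_mono (hrpos i (by omega) (by omega)) (hr i (by omega) (by omega)).2)
      rwa [Finset.prod_const, Nat.card_Icc, show j + d + 1 - (j+1) = d from by omega] at this
    calc (1 + ratio τ j) / (1 + 2 * ratio τ j)
          * ∏ i ∈ Finset.Icc (j + 1) (j + d),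
              ratio τ i ^ ((3:ℝ)/2) / (1 + 2 * ratio τ i)
        ≤ 1 * ∏ i ∈ Finset.Icc (j + 1) (j + d),
              ratio τ i ^ ((3:ℝ)/2) / (1 + 2 * ratio τ i) :=
          mul_le_mul_of_nonneg_right hc hP0
      _ = _ := one_mul _
      _ ≤ _ := hPle
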